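/- arXiv:2012.05813 — 5 statements merged into one kernel-verified Lean document; each statement's English description precedes it below -/
import Mathlib

section
/- Let i ≥ 1 and define P_i(ω) = Σ_{s=0}^{i-1} (4ω)^{i-1-s} * C(2s,s) (so P_i is a polynomial in ω of degree i-1 with P_{i+1}(ω) = 4ω P_i(ω) + C(2i,i)). Then P_i(1) = (i/2) * C(2i,i) and P_i'(1) = (i(i-1)/3) * C(2i,i). -/
/-!
Both identities follow by induction on `i` from the recursion `P_{i+1} = 4ω P_i + C(2i,i)`
and the central binomial recursion `(i+1) C(2i+2,i+1) = 2(2i+1) C(2i,i)`: at `ω = 1` the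
recursion gives `P_{i+1}(1) = 4 P_i(1) + C(2i,i)` and `P_{i+1}'(1) = 4 P_i(1) + 4 P_i'(1)`.
-/

/-- `P_i(ω) = ∑_{s=0}^{i-1} (4ω)^{i-1-s} C(2s,s)`, so that `P_0 = 0` and
`P_{i+1}(ω) = 4ω P_i(ω) + C(2i,i)`. -/
noncomputable def Ppoly (i : ℕ) (ω : ℝ) : ℝ :=
  ∑ s ∈ Finset.range i, (4 * ω) ^ (i - 1 - s) * (Nat.choose (2 * s) s : ℝ)

open Finset

lemma Ppoly_zero : Ppoly 0 = 0 := by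
  ext ω
  simp [Ppoly]

lemma Ppoly_succ (n : ℕ) (ω : ℝ) :
    Ppoly (n + 1) ω = 4 * ω * Ppoly n ω + n.centralBinom := by
  have shift : ∀ s ∈ range n,
      (4 * ω) ^ (n + 1 - 1 - s) * ((2 * s).choose s : ℝ)
        = 4 * ω * ((4 * ω) ^ (n - 1 - s) * ((2 * s).choose s : ℝ)) := by
    intro s hs
    rw [show n + 1 - 1 - s = n - 1 - s + 1 by grind, pow_succ]
    ring
  rw [Ppoly, sum_range_succ, sum_congr rfl shift, ← mul_sum, Nat.add_sub_cancel, Nat.sub_self,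
    pow_zero, one_mul, Ppoly, Nat.centralBinom]

lemma Ppoly_succ_eq (n : ℕ) :
    Ppoly (n + 1) = fun ω => 4 * ω * Ppoly n ω + n.centralBinom :=
  funext (Ppoly_succ n)

lemma succ_mul_centralBinom_succ_real (n : ℕ) :
    ((n : ℝ) + 1) * (n + 1).centralBinom = 2 * (2 * n + 1) * n.centralBinom := by
  exact_mod_cast Nat.succ_mul_centralBinom_succ n

lemma Ppoly_one (i : ℕ) : Ppoly i 1 = i / 2 * i.centralBinom := by
  induction i with
  | zero => simp [Ppoly_zero]
  | succ n ih =>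
    rw [Ppoly_succ, ih]
    push_cast
    linear_combination (-1 / 2 : ℝ) * succ_mul_centralBinom_succ_real n

lemma HasDerivAt.Ppoly_succ {n : ℕ} {ω P' : ℝ} (h : HasDerivAt (Ppoly n) P' ω) :
    HasDerivAt (Ppoly (n + 1)) (4 * Ppoly n ω + 4 * ω * P') ω := by
  rw [Ppoly_succ_eq]
  have h4ω : HasDerivAt (fun ω : ℝ => 4 * ω) 4 ω := by
    simpa using (hasDerivAt_id ω).const_mul 4
  simpa using (h4ω.mul h).add_const (n.centralBinom : ℝ)

lemma hasDerivAt_Ppoly_one (i : ℕ) :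
    HasDerivAt (Ppoly i) (i * (i - 1) / 3 * i.centralBinom) 1 := by
  induction i with
  | zero => simp [Ppoly_zero]
  | succ n ih =>
    convert ih.Ppoly_succ using 1
    rw [Ppoly_one]
    push_cast
    linear_combination (n / 3 : ℝ) * succ_mul_centralBinom_succ_real n

theorem statement4_general (i : ℕ) :
    Ppoly i 1 = (i : ℝ) / 2 * (Nat.choose (2 * i) i : ℝ) ∧
    deriv (Ppoly i) 1 = (i : ℝ) * ((i : ℝ) - 1) / 3 * (Nat.choose (2 * i) i : ℝ) :=
  ⟨Ppoly_one i, (hasDerivAt_Ppoly_one i).deriv⟩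

/-- For `i ≥ 1`, `P_i(1) = (i/2) C(2i,i)` and `P_i'(1) = (i(i-1)/3) C(2i,i)`. -/
theorem statement4 (i : ℕ) (hi : 1 ≤ i) :
    Ppoly i 1 = (i : ℝ) / 2 * (Nat.choose (2 * i) i : ℝ) ∧
    deriv (Ppoly i) 1 = (i : ℝ) * ((i : ℝ) - 1) / 3 * (Nat.choose (2 * i) i : ℝ) :=
  statement4_general i
end

section
/- Let ν be a probability measure on ℤ with finite mean and Σ_{i∈ℤ} i ν(i) > 0, and let (X_n) be the random walk with step distribution ν started at 0. Then for every ε > 0 there exist C and p_0 such that for all p ≥ p_0, the probability that X never hits the interval [p, p+C] is at most ε. -/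
/-!
Let `ρ` be the probability that the walk never returns to its starting point. The events
"the walk is at `x` at time `n` and never comes back to `x`" are disjoint in `n`, and by the
Markov property each has probability `P(X_n = x) ρ`; hence the expected number of visits to
any `x` is at most `1 / ρ`. By the strong law the walk drifts to `+∞`, so it has a last visit
to `0`, which forces `ρ > 0`.

A path from `0` that reaches `[p, ∞)` without hitting `[p, p + C]` jumps, at some time `m`,
from `X_m = p - 1 - j` over the interval with a step larger than `C + 1 + j`. The step is
independent of `X_m`, so the probability of missing is at most
`ρ⁻¹ ∑_j P(ξ > C + 1 + j)`, a tail of the series `∑_c P(ξ > c) ≤ 𝔼[ξ⁺] + 1`.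
-/

open MeasureTheory ProbabilityTheory Filter Finset Topology Function
open scoped ENNReal

lemma measurable_iSup_comap {ι Ω β : Type*} [MeasurableSpace β] (f : ι → Ω → β) {s : Set ι}
    {i : ι} (hi : i ∈ s) :
    Measurable[⨆ j ∈ s, MeasurableSpace.comap (f j) inferInstance] (f i) :=
  Measurable.of_comap_le (le_iSup₂ (f := fun j (_ : j ∈ s) =>
    MeasurableSpace.comap (f j) inferInstance) i hi)

section Shift

variable {Ω β : Type*} [MeasurableSpace Ω] [MeasurableSpace β] {P : Measure Ω}
  {ξ : ℕ → Ω → β}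

abbrev pastSigma (ξ : ℕ → Ω → β) (n : ℕ) : MeasurableSpace Ω :=
  ⨆ i ∈ Set.Iio n, MeasurableSpace.comap (ξ i) inferInstance

lemma map_shift_eq (hmeas : ∀ n, Measurable (ξ n)) (hindep : iIndepFun ξ P)
    (hident : ∀ n, IdentDistrib (ξ n) (ξ 0) P P) (n : ℕ) :
    P.map (fun ω i => ξ (n + i) ω) = P.map (fun ω i => ξ i ω) := by
  have hshift : iIndepFun (fun i => ξ (n + i)) P := hindep.precomp (add_right_injective n)
  rw [hshift.map_fun_eq_infinitePi_map (fun i => hmeas _),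
    hindep.map_fun_eq_infinitePi_map hmeas]
  simp only [(hident _).map_eq]

lemma measure_inter_preimage_shift (hmeas : ∀ n, Measurable (ξ n)) (hindep : iIndepFun ξ P)
    (hident : ∀ n, IdentDistrib (ξ n) (ξ 0) P P) {n : ℕ} {E : Set Ω}
    (hE : MeasurableSet[pastSigma ξ n] E) {A : Set (ℕ → β)} (hA : MeasurableSet A) :
    P (E ∩ (fun ω i => ξ (n + i) ω) ⁻¹' A) = P E * P ((fun ω i => ξ i ω) ⁻¹' A) := by
  have hpast_future : Indep (pastSigma ξ n)
      (⨆ i ∈ Set.Ici n, MeasurableSpace.comap (ξ i) inferInstance) P :=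
    indep_iSup_of_disjoint (fun i => (hmeas i).comap_le) hindep (Set.Iio_disjoint_Ici le_rfl)
  have hfuture : Measurable[⨆ i ∈ Set.Ici n, MeasurableSpace.comap (ξ i) inferInstance]
      (fun ω i => ξ (n + i) ω) := by
    let := ⨆ i ∈ Set.Ici n, MeasurableSpace.comap (ξ i) inferInstance
    exact measurable_pi_lambda _ fun i => measurable_iSup_comap ξ (Nat.le_add_right n i)
  have hlaw : P ((fun ω i => ξ (n + i) ω) ⁻¹' A) = P ((fun ω i => ξ i ω) ⁻¹' A) := by
    rw [← Measure.map_apply (measurable_pi_lambda _ fun i => hmeas _) hA,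
      map_shift_eq hmeas hindep hident n, Measure.map_apply (measurable_pi_lambda _ hmeas) hA]
  rw [(Indep_iff _ _ P).mp hpast_future E _ hE (hfuture hA), hlaw]

end Shift

section

variable {Ω : Type*} [MeasurableSpace Ω] {P : Measure Ω}

lemma ae_tendsto_sum_atTop_of_integral_pos {X : ℕ → Ω → ℝ} (hint : Integrable (X 0) P)
    (hindep : Pairwise ((IndepFun · · P) on X)) (hident : ∀ i, IdentDistrib (X i) (X 0) P P)
    (hpos : 0 < ∫ ω, X 0 ω ∂P) :
    ∀ᵐ ω ∂P, Tendsto (fun n => ∑ i ∈ range n, X i ω) atTop atTop := by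
  filter_upwards [strong_law_ae_real X hint hindep hident] with ω hω
  refine (hω.pos_mul_atTop hpos tendsto_natCast_atTop_atTop).congr' ?_
  filter_upwards [eventually_ne_atTop 0] with n hn
  exact div_mul_cancel₀ _ (Nat.cast_ne_zero.mpr hn)

lemma integrable_intCast_of_summable {μ : Measure ℤ} [IsFiniteMeasure μ]
    (h : Summable fun i : ℤ => |(i : ℝ)| * μ.real {i}) : Integrable (fun i : ℤ => (i : ℝ)) μ := by
  rw [← Measure.sum_smul_dirac μ]
  exact integrable_sum_dirac (fun i => measure_ne_top μ {i})
    (by simpa [mul_comm, measureReal_def] using h)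

lemma tsum_measure_lt_ne_top [IsProbabilityMeasure P] {Y : Ω → ℤ}
    (hint : Integrable (fun ω => (Y ω : ℝ)) P) :
    ∑' c : ℕ, P {ω | (c : ℤ) < Y ω} ≠ ∞ := by
  -- `tsum_prob_mem_Ioi_lt_top` is stated for the `volume` of a `MeasureSpace`.
  let : MeasureSpace Ω := ⟨P⟩
  have hpos := tsum_prob_mem_Ioi_lt_top (X := fun ω => max (Y ω : ℝ) 0) hint.pos_part
    (fun ω => le_max_right _ _)
  convert hpos.ne using 3 with c
  show P _ = P _
  congr 1 with ω
  have hc : ((c : ℤ) : ℝ) = c := Int.cast_natCast c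
  simp only [Set.mem_ofPred_eq, Set.mem_Ioi, lt_max_iff, ← hc, Int.cast_lt]
  exact (or_iff_left (not_lt.mpr (by positivity))).symm

lemma identDistrib_of_measureReal_eq {β : Type*} [MeasurableSpace β] [Countable β]
    [MeasurableSingletonClass β] [IsFiniteMeasure P] {X Y : Ω → β} (hX : Measurable X)
    (hY : Measurable Y) (h : ∀ b, P.real {ω | X ω = b} = P.real {ω | Y ω = b}) :
    IdentDistrib X Y P P where
  aemeasurable_fst := hX.aemeasurable
  aemeasurable_snd := hY.aemeasurable
  map_eq := Measure.ext_of_singleton fun b => by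
    rw [Measure.map_apply hX (measurableSet_singleton b),
      Measure.map_apply hY (measurableSet_singleton b)]
    exact (ENNReal.toReal_eq_toReal_iff' (measure_ne_top _ _) (measure_ne_top _ _)).mp (h b)

lemma integrable_intCast_comp [IsFiniteMeasure P] {Y : Ω → ℤ} (hY : Measurable Y)
    (h : Summable fun i : ℤ => |(i : ℝ)| * P.real {ω | Y ω = i}) :
    Integrable (fun ω => (Y ω : ℝ)) P := by
  refine (integrable_map_measure (measurable_of_countable _).aestronglyMeasurable
    hY.aemeasurable).mp (integrable_intCast_of_summable ?_)
  simp only [map_measureReal_apply hY (measurableSet_singleton _)]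
  exact h

lemma integral_intCast_comp [IsFiniteMeasure P] {Y : Ω → ℤ} (hY : Measurable Y)
    (h : Summable fun i : ℤ => |(i : ℝ)| * P.real {ω | Y ω = i}) :
    ∫ ω, (Y ω : ℝ) ∂P = ∑' i : ℤ, (i : ℝ) * P.real {ω | Y ω = i} := by
  rw [← integral_map hY.aemeasurable (measurable_of_countable _).aestronglyMeasurable,
    integral_countable ((integrable_map_measure (measurable_of_countable _).aestronglyMeasurable
      hY.aemeasurable).mpr (integrable_intCast_comp hY h))]
  simp only [map_measureReal_apply hY (measurableSet_singleton _), smul_eq_mul, mul_comm]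
  rfl

end

namespace RandomWalk

variable {Ω : Type*} {ξ : ℕ → Ω → ℤ}

def walk (ξ : ℕ → Ω → ℤ) (n : ℕ) (ω : Ω) : ℤ := ∑ k ∈ range n, ξ k ω

lemma walk_add (n k : ℕ) (ω : Ω) :
    walk ξ (n + k) ω = walk ξ n ω + ∑ i ∈ range k, ξ (n + i) ω :=
  sum_range_add _ n k

lemma walk_succ (n : ℕ) (ω : Ω) : walk ξ (n + 1) ω = walk ξ n ω + ξ n ω :=
  sum_range_succ _ n

lemma measurable_walk_pastSigma (n : ℕ) : Measurable[pastSigma ξ n] (walk ξ n) := by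
  let := pastSigma ξ n
  exact Finset.measurable_sum _ fun i hi => measurable_iSup_comap ξ (mem_range.mp hi)

def neverReturns : Set (ℕ → ℤ) := {x | ∀ k, ∑ i ∈ range (k + 1), x i ≠ 0}

lemma measurableSet_neverReturns : MeasurableSet neverReturns := by
  simp only [neverReturns, Set.ofPred_forall]
  exact MeasurableSet.iInter fun k => (measurableSet_singleton 0).compl.preimage
    (Finset.measurable_sum _ fun i _ => measurable_pi_apply i)

def lastVisit (ξ : ℕ → Ω → ℤ) (x : ℤ) (n : ℕ) : Set Ω :=
  {ω | walk ξ n ω = x} ∩ (fun ω i => ξ (n + i) ω) ⁻¹' neverReturns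

lemma pairwise_disjoint_lastVisit (x : ℤ) : Pairwise (Disjoint on lastVisit ξ x) := by
  suffices h : ∀ n k, Disjoint (lastVisit ξ x n) (lastVisit ξ x (n + (k + 1))) by
    intro n n' hnn'
    rcases hnn'.lt_or_gt with hlt | hlt
    · obtain ⟨k, rfl⟩ := Nat.exists_eq_add_of_lt hlt
      exact h n k
    · obtain ⟨k, rfl⟩ := Nat.exists_eq_add_of_lt hlt
      exact (h n' k).symm
  refine fun n k => Set.disjoint_left.mpr fun ω ⟨hn, hnever⟩ ⟨hnk, _⟩ => hnever k ?_
  have := walk_add (ξ := ξ) n (k + 1) ω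
  change walk ξ n ω = x at hn
  change walk ξ (n + (k + 1)) ω = x at hnk
  change ∑ i ∈ range (k + 1), ξ (n + i) ω = 0
  omega

lemma exists_mem_lastVisit_zero {ω : Ω} (h : ∀ᶠ n in atTop, walk ξ n ω ≠ 0) :
    ∃ n, ω ∈ lastVisit ξ 0 n := by
  obtain ⟨N, hN⟩ := eventually_atTop.mp h
  have hzero : walk ξ 0 ω = 0 := sum_range_zero _
  set n := Nat.findGreatest (fun k => walk ξ k ω = 0) N
  have hn : walk ξ n ω = 0 :=
    Nat.findGreatest_spec (P := fun k => walk ξ k ω = 0) (Nat.zero_le N) hzero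
  refine ⟨n, hn, fun k hk => ?_⟩
  have hret : walk ξ (n + (k + 1)) ω = 0 := by rw [walk_add, hn, hk, add_zero]
  by_cases hle : n + (k + 1) ≤ N
  · exact Nat.findGreatest_is_greatest (P := fun k => walk ξ k ω = 0) (by omega) hle hret
  · exact hN _ (by omega) hret

lemma exists_jump_over {S : ℕ → ℤ} {p : ℤ} {C : ℕ} (h0 : S 0 < p) (hreach : ∃ n, p ≤ S n)
    (hmiss : ∀ n, S n ∉ Set.Icc p (p + C)) :
    ∃ m, ∃ j : ℕ, S m = p - 1 - j ∧ ((C + 1 + j : ℕ) : ℤ) < S (m + 1) - S m := by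
  classical
  have hne : Nat.find hreach ≠ 0 := fun h => by
    have := Nat.find_spec hreach
    rw [h] at this
    omega
  obtain ⟨m, hm⟩ := Nat.exists_eq_succ_of_ne_zero hne
  have hbelow : S m < p := not_le.mp (Nat.find_min hreach (by omega))
  have habove : p ≤ S (m + 1) := by
    have := Nat.find_spec hreach
    rwa [hm] at this
  have hover : p + C < S (m + 1) := by
    have := hmiss (m + 1)
    rw [Set.mem_Icc, not_and_or] at this
    omega
  exact ⟨m, (p - 1 - S m).toNat, by omega, by push_cast; omega⟩

variable [MeasurableSpace Ω] {P : Measure Ω}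

lemma measurable_walk (hmeas : ∀ n, Measurable (ξ n)) (n : ℕ) : Measurable (walk ξ n) :=
  Finset.measurable_sum _ fun i _ => hmeas i

def escapeProb (P : Measure Ω) (ξ : ℕ → Ω → ℤ) : ℝ≥0∞ :=
  P ((fun ω i => ξ i ω) ⁻¹' neverReturns)

lemma measurableSet_lastVisit (hmeas : ∀ n, Measurable (ξ n)) (x : ℤ) (n : ℕ) :
    MeasurableSet (lastVisit ξ x n) :=
  (measurable_walk hmeas n (measurableSet_singleton x)).inter
    (measurable_pi_lambda _ (fun i => hmeas (n + i)) measurableSet_neverReturns)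

lemma measure_iUnion_lastVisit (hmeas : ∀ n, Measurable (ξ n)) (hindep : iIndepFun ξ P)
    (hident : ∀ n, IdentDistrib (ξ n) (ξ 0) P P) (x : ℤ) :
    P (⋃ n, lastVisit ξ x n) = (∑' n, P {ω | walk ξ n ω = x}) * escapeProb P ξ := by
  rw [measure_iUnion (pairwise_disjoint_lastVisit x) (measurableSet_lastVisit hmeas x),
    ← ENNReal.tsum_mul_right]
  exact tsum_congr fun n => measure_inter_preimage_shift hmeas hindep hident
    (measurable_walk_pastSigma n (measurableSet_singleton x)) measurableSet_neverReturns

lemma ae_tendsto_walk_atTop (hindep : iIndepFun ξ P)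
    (hident : ∀ n, IdentDistrib (ξ n) (ξ 0) P P) (hint : Integrable (fun ω => (ξ 0 ω : ℝ)) P)
    (hpos : 0 < ∫ ω, (ξ 0 ω : ℝ) ∂P) :
    ∀ᵐ ω ∂P, Tendsto (fun n => walk ξ n ω) atTop atTop := by
  have hcast : Measurable fun i : ℤ => (i : ℝ) := measurable_of_countable _
  filter_upwards [ae_tendsto_sum_atTop_of_integral_pos (X := fun n ω => (ξ n ω : ℝ)) hint
    (fun i j hij => (hindep.indepFun hij).comp hcast hcast)
    (fun i => (hident i).comp hcast) hpos] with ω hω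
  rw [← tendsto_intCast_atTop_iff (R := ℝ)]
  simpa only [walk, Int.cast_sum] using hω

variable [IsProbabilityMeasure P]

lemma tsum_measure_walk_eq_le_inv_escapeProb (hmeas : ∀ n, Measurable (ξ n))
    (hindep : iIndepFun ξ P) (hident : ∀ n, IdentDistrib (ξ n) (ξ 0) P P) (x : ℤ) :
    ∑' n, P {ω | walk ξ n ω = x} ≤ (escapeProb P ξ)⁻¹ :=
  ENNReal.le_inv_iff_mul_le.mpr
    (measure_iUnion_lastVisit hmeas hindep hident x ▸ prob_le_one)

lemma escapeProb_ne_zero (hmeas : ∀ n, Measurable (ξ n)) (hindep : iIndepFun ξ P)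
    (hident : ∀ n, IdentDistrib (ξ n) (ξ 0) P P)
    (htend : ∀ᵐ ω ∂P, Tendsto (fun n => walk ξ n ω) atTop atTop) :
    escapeProb P ξ ≠ 0 := by
  have hlast : ∀ᵐ ω ∂P, ω ∈ ⋃ n, lastVisit ξ 0 n := by
    filter_upwards [htend] with ω hω
    exact Set.mem_iUnion.mpr
      (exists_mem_lastVisit_zero ((hω.eventually_ge_atTop 1).mono fun n hn => by omega))
  have hone : P (⋃ n, lastVisit ξ 0 n) = 1 := by
    rw [← measure_univ (μ := P)]
    exact (ae_iff_measure_eq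
      (MeasurableSet.iUnion (measurableSet_lastVisit hmeas 0)).nullMeasurableSet).mp hlast
  intro h
  rw [measure_iUnion_lastVisit hmeas hindep hident, h, mul_zero] at hone
  exact zero_ne_one hone

lemma measure_avoid_Icc_le (hmeas : ∀ n, Measurable (ξ n)) (hindep : iIndepFun ξ P)
    (hident : ∀ n, IdentDistrib (ξ n) (ξ 0) P P)
    (htend : ∀ᵐ ω ∂P, Tendsto (fun n => walk ξ n ω) atTop atTop) {p : ℤ} (hp : 0 < p) (C : ℕ) :
    P {ω | ∀ n, walk ξ n ω ∉ Set.Icc p (p + C)}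
      ≤ (escapeProb P ξ)⁻¹ * ∑' j : ℕ, P {ω | ((C + 1 + j : ℕ) : ℤ) < ξ 0 ω} := by
  have hcover : {ω | ∀ n, walk ξ n ω ∉ Set.Icc p (p + C)} ≤ᵐ[P]
      ⋃ m, ⋃ j : ℕ, {ω | walk ξ m ω = p - 1 - j} ∩ {ω | ((C + 1 + j : ℕ) : ℤ) < ξ m ω} := by
    filter_upwards [htend] with ω hω hmiss
    obtain ⟨m, j, hm, hj⟩ := exists_jump_over (S := fun n => walk ξ n ω)
      (by simpa [walk] using hp) (hω.eventually_ge_atTop p).exists hmiss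
    rw [walk_succ, add_sub_cancel_left] at hj
    exact Set.mem_iUnion₂.mpr ⟨m, j, hm, hj⟩
  have hstep : ∀ m (j : ℕ),
      P ({ω | walk ξ m ω = p - 1 - j} ∩ {ω | ((C + 1 + j : ℕ) : ℤ) < ξ m ω})
        = P {ω | walk ξ m ω = p - 1 - j} * P {ω | ((C + 1 + j : ℕ) : ℤ) < ξ 0 ω} := fun m j =>
    measure_inter_preimage_shift (A := {y | ((C + 1 + j : ℕ) : ℤ) < y 0}) hmeas hindep hident
      (measurable_walk_pastSigma m (measurableSet_singleton _))
      (measurableSet_lt measurable_const (measurable_pi_apply 0))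
  calc P {ω | ∀ n, walk ξ n ω ∉ Set.Icc p (p + C)}
      ≤ ∑' m, ∑' j : ℕ,
          P ({ω | walk ξ m ω = p - 1 - j} ∩ {ω | ((C + 1 + j : ℕ) : ℤ) < ξ m ω}) :=
        (measure_mono_ae hcover).trans
          ((measure_iUnion_le _).trans (ENNReal.tsum_le_tsum fun m => measure_iUnion_le _))
    _ = ∑' j : ℕ, (∑' m, P {ω | walk ξ m ω = p - 1 - j})
          * P {ω | ((C + 1 + j : ℕ) : ℤ) < ξ 0 ω} := by
        simp only [hstep]
        rw [ENNReal.tsum_comm]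
        simp only [ENNReal.tsum_mul_right]
    _ ≤ (escapeProb P ξ)⁻¹ * ∑' j : ℕ, P {ω | ((C + 1 + j : ℕ) : ℤ) < ξ 0 ω} := by
        rw [← ENNReal.tsum_mul_left]
        exact ENNReal.tsum_le_tsum fun j =>
          mul_le_mul_left (tsum_measure_walk_eq_le_inv_escapeProb hmeas hindep hident _) _

lemma tendsto_escapeProb_inv_mul_tail (hmeas : ∀ n, Measurable (ξ n)) (hindep : iIndepFun ξ P)
    (hident : ∀ n, IdentDistrib (ξ n) (ξ 0) P P) (hint : Integrable (fun ω => (ξ 0 ω : ℝ)) P)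
    (hpos : 0 < ∫ ω, (ξ 0 ω : ℝ) ∂P) :
    Tendsto (fun C : ℕ => (escapeProb P ξ)⁻¹ * ∑' j : ℕ, P {ω | ((C + 1 + j : ℕ) : ℤ) < ξ 0 ω})
      atTop (𝓝 0) := by
  have htail : Tendsto (fun C : ℕ => ∑' j : ℕ, P {ω | ((C + 1 + j : ℕ) : ℤ) < ξ 0 ω}) atTop
      (𝓝 0) := by
    refine ((ENNReal.tendsto_sum_nat_add _ (tsum_measure_lt_ne_top hint)).comp
      (tendsto_add_atTop_nat 1)).congr fun C => tsum_congr fun j => ?_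
    rw [add_comm j]
  have hρ := escapeProb_ne_zero hmeas hindep hident
    (ae_tendsto_walk_atTop hindep hident hint hpos)
  simpa only [mul_zero] using
    ENNReal.Tendsto.const_mul htail (Or.inr (ENNReal.inv_ne_top.mpr hρ))

end RandomWalk

open RandomWalk in
theorem statement6_general {Ω : Type*} [MeasurableSpace Ω] (P : Measure Ω) [IsProbabilityMeasure P]
    (ν : ℤ → ℝ) (ξ : ℕ → Ω → ℤ)
    (hmeas : ∀ n, Measurable (ξ n))
    (hindep : iIndepFun ξ P)
    (hlaw : ∀ n, ∀ i : ℤ, (P {ω | ξ n ω = i}).toReal = ν i)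
    (hfinite_mean : Summable fun i : ℤ => |(i : ℝ)| * ν i)
    (hpos_mean : 0 < ∑' i : ℤ, (i : ℝ) * ν i) :
    ∀ ε > (0 : ℝ), ∃ C : ℕ, ∃ p0 : ℕ, ∀ p : ℕ, p0 ≤ p →
      P {ω | ∀ n : ℕ, (∑ k ∈ Finset.range n, ξ k ω) ∉ Set.Icc (p : ℤ) ((p : ℤ) + C)}
        ≤ ENNReal.ofReal ε := by
  intro ε hε
  have hν : ∀ i, P.real {ω | ξ 0 ω = i} = ν i := hlaw 0
  have hident (n : ℕ) : IdentDistrib (ξ n) (ξ 0) P P :=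
    identDistrib_of_measureReal_eq (hmeas n) (hmeas 0) fun i => (hlaw n i).trans (hlaw 0 i).symm
  have hsum : Summable fun i : ℤ => |(i : ℝ)| * P.real {ω | ξ 0 ω = i} := by
    simpa only [hν] using hfinite_mean
  have hint := integrable_intCast_comp (hmeas 0) hsum
  have hpos : 0 < ∫ ω, (ξ 0 ω : ℝ) ∂P := by
    rwa [integral_intCast_comp (hmeas 0) hsum, tsum_congr fun i => by rw [hν]]
  obtain ⟨C, hC⟩ := ((tendsto_escapeProb_inv_mul_tail hmeas hindep hident hint hpos
    ).eventually_le_const (ENNReal.ofReal_pos.mpr hε)).exists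
  refine ⟨C, 1, fun p hp => (measure_avoid_Icc_le hmeas hindep hident
    (ae_tendsto_walk_atTop hindep hident hint hpos) (by omega) C).trans hC⟩

/-- Let `ν` be a probability measure on `ℤ` with finite mean and strictly positive mean,
and let `X_n = ξ_0 + ⋯ + ξ_{n-1}` be the random walk with i.i.d. steps of law `ν` started
at `0`. Then for every `ε > 0` there exist `C` and `p₀` such that for all `p ≥ p₀` the
probability that `X` never hits the interval `[p, p+C]` is at most `ε`. -/
theorem statement6 {Ω : Type*} [MeasurableSpace Ω] (P : Measure Ω) [IsProbabilityMeasure P]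
    (ν : ℤ → ℝ) (ξ : ℕ → Ω → ℤ)
    (hmeas : ∀ n, Measurable (ξ n))
    (hindep : iIndepFun ξ P)
    (hlaw : ∀ n, ∀ i : ℤ, (P {ω | ξ n ω = i}).toReal = ν i)
    (hν0 : ∀ i, 0 ≤ ν i) (hν1 : HasSum ν 1)
    (hfinite_mean : Summable fun i : ℤ => |(i : ℝ)| * ν i)
    (hpos_mean : 0 < ∑' i : ℤ, (i : ℝ) * ν i) :
    ∀ ε > (0 : ℝ), ∃ C : ℕ, ∃ p0 : ℕ, ∀ p : ℕ, p0 ≤ p →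
      P {ω | ∀ n : ℕ, (∑ k ∈ Finset.range n, ξ k ω) ∉ Set.Icc (p : ℤ) ((p : ℤ) + C)}
        ≤ ENNReal.ofReal ε :=
  statement6_general P ν ξ hmeas hindep hlaw hfinite_mean hpos_mean
end

section
/- Let (X^{(ω)})_{ω ∈ Ω} be a family of nonnegative real random variables that is uniformly integrable, and for each ω let (X_t^{(ω)})_{t≥1} be i.i.d. copies of X^{(ω)}. Then the sample averages (1/t) Σ_{i=1}^t X_i^{(ω)} converge in probability to E[X^{(ω)}] uniformly in ω: for all ε > 0 there is t_0 such that for all t ≥ t_0 and all ω ∈ Ω, P(|(1/t) Σ_{i=1}^t X_i^{(ω)} − E[X^{(ω)}]| > ε) < ε. -/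
/-!
Truncate at a level `B` beyond which the uniform integrability bound holds, writing
`X = min X B + (X - min X B)`. The truncated variables take values in `[0, B]`, so Chebyshev's
inequality (with Popoviciu's bound `B² / 4` on the variance) controls the deviation of their
sample mean by `B² / (t ε²)`, uniformly in the family. The remainders are nonnegative with mean at
most the tail integral `δ`, so Markov's inequality controls their contribution by `4 δ / ε`.
Taking `δ = ε² / 8` and `t > 2 B² / ε³` makes the sum smaller than `ε`.
-/

open MeasureTheory ProbabilityTheory Finset

lemma measure_ge_le_ofReal_integral_div {Ω : Type*} [MeasurableSpace Ω] {P : Measure Ω}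
    [IsFiniteMeasure P] {f : Ω → ℝ} (hf : 0 ≤ᵐ[P] f) (hint : Integrable f P) {c : ℝ}
    (hc : 0 < c) : P {ω | c ≤ f ω} ≤ ENNReal.ofReal ((∫ ω, f ω ∂P) / c) := by
  rw [← ofReal_measureReal]
  exact ENNReal.ofReal_le_ofReal <|
    (le_div_iff₀' hc).mpr (mul_meas_ge_le_integral_of_nonneg hf hint c)

noncomputable def sampleMean {Ω : Type*} (Y : ℕ → Ω → ℝ) (t : ℕ) (ω : Ω) : ℝ :=
  (t : ℝ)⁻¹ * ∑ k ∈ range t, Y k ω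

section SampleMean

variable {Ω : Type*} {Y Z : ℕ → Ω → ℝ} {t : ℕ}

lemma sampleMean_eq_smul_sum : sampleMean Y t = (t : ℝ)⁻¹ • ∑ k ∈ range t, Y k := by
  ext ω
  simp only [sampleMean, Pi.smul_apply, Finset.sum_apply, smul_eq_mul]

lemma sampleMean_sub (ω : Ω) :
    sampleMean (fun k ω => Y k ω - Z k ω) t ω = sampleMean Y t ω - sampleMean Z t ω := by
  simp only [sampleMean, sum_sub_distrib, mul_sub]

lemma sampleMean_nonneg (hY : ∀ k ω, 0 ≤ Y k ω) (ω : Ω) : 0 ≤ sampleMean Y t ω :=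
  mul_nonneg (inv_nonneg.mpr t.cast_nonneg) (sum_nonneg fun k _ => hY k ω)

variable [MeasurableSpace Ω] {P : Measure Ω}

lemma integrable_sampleMean (hY : ∀ k, Integrable (Y k) P) : Integrable (sampleMean Y t) P :=
  (integrable_finsetSum _ fun k _ => hY k).const_mul _

lemma memLp_sampleMean (hY : ∀ k, MemLp (Y k) 2 P) : MemLp (sampleMean Y t) 2 P := by
  rw [sampleMean_eq_smul_sum]
  exact (memLp_finsetSum' _ fun k _ => hY k).const_smul _

lemma integral_sampleMean (hident : ∀ k, IdentDistrib (Y k) (Y 0) P P)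
    (hint : Integrable (Y 0) P) (ht : t ≠ 0) : ∫ ω, sampleMean Y t ω ∂P = ∫ ω, Y 0 ω ∂P := by
  have hint' k : Integrable (Y k) P := (hident k).integrable_iff.mpr hint
  simp only [sampleMean]
  rw [integral_const_mul, integral_finsetSum _ fun k _ => hint' k,
    sum_congr rfl fun k _ => (hident k).integral_eq, sum_const, card_range, nsmul_eq_mul,
    inv_mul_cancel_left₀ (Nat.cast_ne_zero.mpr ht)]

lemma measure_le_sampleMean_add_integral_le [IsProbabilityMeasure P] (hY : ∀ k ω, 0 ≤ Y k ω)
    (hident : ∀ k, IdentDistrib (Y k) (Y 0) P P) (hint : Integrable (Y 0) P) {c : ℝ}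
    (hc : 0 < c) (ht : t ≠ 0) :
    P {ω | c ≤ sampleMean Y t ω + ∫ ω, Y 0 ω ∂P} ≤ ENNReal.ofReal (2 * (∫ ω, Y 0 ω ∂P) / c) := by
  have hmean : Integrable (sampleMean Y t) P :=
    integrable_sampleMean fun k => (hident k).integrable_iff.mpr hint
  have hEY : 0 ≤ ∫ ω, Y 0 ω ∂P := integral_nonneg (hY 0)
  convert measure_ge_le_ofReal_integral_div
    (ae_of_all _ fun ω => add_nonneg (sampleMean_nonneg hY ω) hEY)
    (hmean.add (integrable_const _)) hc using 3
  rw [integral_add hmean (integrable_const _), integral_sampleMean hident hint ht, integral_const,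
    probReal_univ, one_smul, two_mul]

lemma variance_sampleMean (hY : ∀ k, MemLp (Y k) 2 P)
    (hindep : Pairwise fun k l => IndepFun (Y k) (Y l) P)
    (hident : ∀ k, IdentDistrib (Y k) (Y 0) P P) :
    variance (sampleMean Y t) P = variance (Y 0) P / t := by
  have hsum : variance (∑ k ∈ range t, Y k) P = ∑ k ∈ range t, variance (Y k) P :=
    IndepFun.variance_sum (fun k _ => hY k) fun k _ l _ hkl => hindep hkl
  rw [sampleMean_eq_smul_sum, variance_smul, hsum, sum_congr rfl fun k _ => (hident k).variance_eq,
    sum_const, card_range, nsmul_eq_mul]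
  rcases eq_or_ne (t : ℝ) 0 with ht | ht
  · simp [ht]
  · field_simp

lemma measure_le_abs_sampleMean_sub_le [IsProbabilityMeasure P] {a b c : ℝ}
    (hbdd : ∀ᵐ ω ∂P, Y 0 ω ∈ Set.Icc a b)
    (hindep : Pairwise fun k l => IndepFun (Y k) (Y l) P)
    (hident : ∀ k, IdentDistrib (Y k) (Y 0) P P) (hc : 0 < c) (ht : t ≠ 0) :
    P {ω | c ≤ |sampleMean Y t ω - ∫ ω, Y 0 ω ∂P|}
      ≤ ENNReal.ofReal (((b - a) / 2) ^ 2 / (t * c ^ 2)) := by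
  have hmeas0 : AEMeasurable (Y 0) P := (hident 0).aemeasurable_fst
  have hY0 : MemLp (Y 0) 2 P := memLp_of_bounded hbdd hmeas0.aestronglyMeasurable 2
  have hY k : MemLp (Y k) 2 P := (hident k).memLp_iff.mpr hY0
  have hvar : variance (sampleMean Y t) P ≤ ((b - a) / 2) ^ 2 / t := by
    rw [variance_sampleMean hY hindep hident]
    gcongr
    exact variance_le_sq_of_bounded hbdd hmeas0
  calc P {ω | c ≤ |sampleMean Y t ω - ∫ ω, Y 0 ω ∂P|}
      = P {ω | c ≤ |sampleMean Y t ω - ∫ ω, sampleMean Y t ω ∂P|} := by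
        rw [integral_sampleMean hident (hY0.integrable one_le_two) ht]
    _ ≤ ENNReal.ofReal (variance (sampleMean Y t) P / c ^ 2) :=
        meas_ge_le_variance_div_sq (memLp_sampleMean hY) hc
    _ ≤ ENNReal.ofReal (((b - a) / 2) ^ 2 / (t * c ^ 2)) := by
        rw [← div_div]
        gcongr

end SampleMean


lemma integral_sub_min_le_setIntegral {Ω : Type*} [MeasurableSpace Ω] {P : Measure Ω}
    [IsFiniteMeasure P] {X : Ω → ℝ} (hX : Integrable X P) (hnonneg : 0 ≤ᵐ[P] X) {A B : ℝ} (hB : 0 ≤ B)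
    (hAB : A ≤ B) : ∫ ω, (X ω - min (X ω) B) ∂P ≤ ∫ ω in {ω | A < X ω}, X ω ∂P := by
  have htail : NullMeasurableSet {ω | A < X ω} P :=
    nullMeasurableSet_lt aemeasurable_const hX.aemeasurable
  rw [← integral_indicator₀ htail]
  refine integral_mono_ae (hX.sub (hX.inf (integrable_const B))) (hX.indicator₀ htail) ?_
  filter_upwards [hnonneg] with ω hω
  by_cases hXB : X ω ≤ B
  · simp only [min_eq_left hXB, sub_self]
    exact Set.indicator_nonneg (fun _ _ => hω) ω
  · have hAX : ω ∈ {ω | A < X ω} := lt_of_le_of_lt hAB (not_le.mp hXB)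
    rw [Set.indicator_of_mem hAX, min_eq_right (le_of_not_ge hXB)]
    linarith

lemma measure_lt_abs_sampleMean_sub_integral_le {Ω : Type*} [MeasurableSpace Ω]
    {P : Measure Ω} [IsProbabilityMeasure P] {X : ℕ → Ω → ℝ} (hnonneg : 0 ≤ᵐ[P] X 0)
    (hindep : Pairwise fun k l => IndepFun (X k) (X l) P)
    (hident : ∀ k, IdentDistrib (X k) (X 0) P P) (hint : Integrable (X 0) P)
    {A B δ ε : ℝ} (hB : 0 ≤ B) (hAB : A ≤ B) (htail : ∫ ω in {ω | A < X 0 ω}, X 0 ω ∂P ≤ δ)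
    (hε : 0 < ε) {t : ℕ} (ht : t ≠ 0) :
    P {ω | ε < |sampleMean X t ω - ∫ ω, X 0 ω ∂P|}
      ≤ ENNReal.ofReal (4 * δ / ε + B ^ 2 / (t * ε ^ 2)) := by
  set Y : ℕ → Ω → ℝ := fun k ω => min (X k ω) B
  set Z : ℕ → Ω → ℝ := fun k ω => X k ω - Y k ω
  have hmin : Measurable fun x : ℝ => min x B := measurable_id.min measurable_const
  have hYid k : IdentDistrib (Y k) (Y 0) P P := (hident k).comp hmin
  have hZid k : IdentDistrib (Z k) (Z 0) P P := (hident k).comp (measurable_id.sub hmin)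
  have hYindep : Pairwise fun k l => IndepFun (Y k) (Y l) P :=
    fun k l hkl => (hindep hkl).comp hmin hmin
  have hYint : Integrable (Y 0) P := hint.inf (integrable_const B)
  have hZint : Integrable (Z 0) P := hint.sub hYint
  have hZnonneg k ω : 0 ≤ Z k ω := sub_nonneg.mpr (min_le_left _ _)
  have hYbdd : ∀ᵐ ω ∂P, Y 0 ω ∈ Set.Icc 0 B := by
    filter_upwards [hnonneg] with ω hω using ⟨le_min hω hB, min_le_right _ _⟩
  have hmeanZ : ∫ ω, Z 0 ω ∂P ≤ δ :=
    (integral_sub_min_le_setIntegral hint hnonneg hB hAB).trans htail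
  have hmeanX : ∫ ω, X 0 ω ∂P = ∫ ω, Z 0 ω ∂P + ∫ ω, Y 0 ω ∂P := by
    rw [integral_sub hint hYint]
    ring
  have hEZ : 0 ≤ ∫ ω, Z 0 ω ∂P := integral_nonneg (hZnonneg 0)
  have hδ : 0 ≤ δ := hEZ.trans hmeanZ
  -- the remainders are nonnegative, so `|Z̄ₜ - E Z| ≤ Z̄ₜ + E Z`
  have hincl : {ω | ε < |sampleMean X t ω - ∫ ω, X 0 ω ∂P|}
      ⊆ {ω | ε / 2 ≤ sampleMean Z t ω + ∫ ω, Z 0 ω ∂P}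
        ∪ {ω | ε / 2 ≤ |sampleMean Y t ω - ∫ ω, Y 0 ω ∂P|} := by
    intro ω hω
    by_contra h
    simp only [Set.mem_union, Set.mem_ofPred_eq, not_or, not_le] at h hω
    have hsplit := sampleMean_sub (Y := X) (Z := Y) (t := t) ω
    have hZmean := sampleMean_nonneg hZnonneg (t := t) ω
    rcases lt_abs.mp hω with hX | hX <;> linarith [abs_lt.mp h.2]
  have hmarkov : P {ω | ε / 2 ≤ sampleMean Z t ω + ∫ ω, Z 0 ω ∂P}
      ≤ ENNReal.ofReal (4 * δ / ε) := by
    refine (measure_le_sampleMean_add_integral_le hZnonneg hZid hZint (half_pos hε) ht).trans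
      (ENNReal.ofReal_le_ofReal ?_)
    rw [div_le_div_iff₀ (half_pos hε) hε]
    nlinarith
  have hcheb := measure_le_abs_sampleMean_sub_le hYbdd hYindep hYid (half_pos hε) ht
  calc P {ω | ε < |sampleMean X t ω - ∫ ω, X 0 ω ∂P|}
      ≤ P {ω | ε / 2 ≤ sampleMean Z t ω + ∫ ω, Z 0 ω ∂P}
        + P {ω | ε / 2 ≤ |sampleMean Y t ω - ∫ ω, Y 0 ω ∂P|} :=
        (measure_mono hincl).trans (measure_union_le _ _)
    _ ≤ ENNReal.ofReal (4 * δ / ε) + ENNReal.ofReal (B ^ 2 / (t * ε ^ 2)) := by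
        refine add_le_add hmarkov (hcheb.trans_eq ?_)
        congr 1
        field_simp
        ring
    _ = ENNReal.ofReal (4 * δ / ε + B ^ 2 / (t * ε ^ 2)) :=
        (ENNReal.ofReal_add (by positivity) (by positivity)).symm

/-- Uniform weak law of large numbers: if `(X^{(ω)})_{ω ∈ ι}` is a uniformly integrable
family of nonnegative real random variables and, for each `ω`, `(X_t^{(ω)})_{t}` are
i.i.d. copies of `X^{(ω)}`, then the sample averages converge in probability to
`E[X^{(ω)}]` uniformly in `ω`: for all `ε > 0` there is `t₀` such that for all `t ≥ t₀`
and all `ω`, `P(|t⁻¹ ∑_{i<t} X_i^{(ω)} − E[X^{(ω)}]| > ε) < ε`. -/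
theorem statement7 {Ω : Type*} [MeasurableSpace Ω] (P : Measure Ω) [IsProbabilityMeasure P]
    {ι : Type*} (X : ι → ℕ → Ω → ℝ)
    (hmeas : ∀ i t, Measurable (X i t))
    (hnonneg : ∀ i t ω, 0 ≤ X i t ω)
    (hindep : ∀ i, iIndepFun (X i) P)
    (hident : ∀ i t, Measure.map (X i t) P = Measure.map (X i 0) P)
    (hint : ∀ i, Integrable (X i 0) P)
    (hUI : ∀ δ > (0 : ℝ), ∃ A : ℝ, ∀ i, ∫ ω in {ω | A < X i 0 ω}, X i 0 ω ∂P ≤ δ) :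
    ∀ ε > (0 : ℝ), ∃ t0 : ℕ, ∀ t : ℕ, t0 ≤ t → ∀ i : ι,
      P {ω | ε < |(t : ℝ)⁻¹ * ∑ k ∈ Finset.range t, X i k ω - ∫ ω', X i 0 ω' ∂P|}
        < ENNReal.ofReal ε := by
  intro ε hε
  obtain ⟨A, hA⟩ := hUI (ε ^ 2 / 8) (by positivity)
  set B := max A 0
  obtain ⟨t0, ht0⟩ := exists_nat_gt (2 * B ^ 2 / ε ^ 3)
  refine ⟨t0, fun t ht i => ?_⟩
  have htB : 2 * B ^ 2 / ε ^ 3 < t := ht0.trans_le (by exact_mod_cast ht)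
  have htpos : (0 : ℝ) < t := lt_of_le_of_lt (by positivity) htB
  have hsmall : B ^ 2 / (t * ε ^ 2) < ε / 2 := by
    rw [div_lt_iff₀ (by positivity)] at htB ⊢
    nlinarith
  calc _ ≤ ENNReal.ofReal (4 * (ε ^ 2 / 8) / ε + B ^ 2 / (t * ε ^ 2)) :=
        measure_lt_abs_sampleMean_sub_integral_le (ae_of_all _ (hnonneg i 0))
          (fun k l hkl => (hindep i).indepFun hkl)
          (fun k => ⟨(hmeas i k).aemeasurable, (hmeas i 0).aemeasurable, hident i k⟩) (hint i)
          (le_max_right A 0) (le_max_left A 0) (hA i) hε (by exact_mod_cast htpos.ne')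
    _ < ENNReal.ofReal ε := by
        rw [ENNReal.ofReal_lt_ofReal_iff hε]
        field_simp at hsmall ⊢
        linarith
end

section
/- The recursion β_g(f)·C(|f|+1, 2) = Σ (1+|h¹|)·C(v(h², g²), 2g*+2)·β_{g¹}(h¹)·β_{g²}(h²) + Σ_{g*≥0} C(v(f,g)+2g*, 2g*+2)·β_{g−g*}(f) (sums over h¹+h²=f, g¹+g²+g*=g) implies: if v(f,g) ≥ κ|f| for some κ > 0, then Σ_{h¹+h²=f, g¹+g²=g} |h¹| β_{g¹}(h¹) · |h²| β_{g²}(h²) ≤ (16/κ²) |f| β_g(f). -/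
/-- `|f| = Σ_j j f_j`, the number of edges of a bipartite map with face degrees `f`. -/
def fsize (f : ℕ →₀ ℕ) : ℕ := f.sum fun j n => j * n

/-- `v(f,g) = 2 − 2g + Σ_j (j−1) f_j`, the vertex count given by the Euler formula. -/
def vInt (f : ℕ →₀ ℕ) (g : ℕ) : ℤ := 2 - 2 * (g : ℤ) + f.sum fun j n => ((j : ℤ) - 1) * n

/-!
Keep only the `g* = 0` terms of the recursion. In a term with `h¹ + h² = f`, `g¹ + g² = g` the two
vertex counts add up to `v(f,g) + 2`, so if `v(h¹,g¹) ≤ v(h²,g²)` then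
`v(h²,g²) - 1 ≥ (κ/2)|f| ≥ (κ/2)|h²|` and `C(v(h²,g²),2) ≥ (κ²/8)|f||h²|`. This bounds the half of the
target sum where `v(h¹,g¹) ≤ v(h²,g²)` by `(8/κ²) C(|f|+1,2) β_g(f) / |f| ≤ (8/κ²)|f| β_g(f)` (the remaining terms of the
recursion are nonnegative), and
swapping `(h¹,g¹) ↔ (h²,g²)` covers the other half.
-/

open Finset

/-- Binomials with a negative upper entry are read as `0` through `Int.toNat`. -/
def BipartiteRecursion (β : ℕ → (ℕ →₀ ℕ) → ℕ) : Prop :=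
  ∀ (g : ℕ) (f : ℕ →₀ ℕ),
    Nat.choose (fsize f + 1) 2 * β g f =
      (∑ hh ∈ antidiagonal f, ∑ gg ∈ antidiagonal g, ∑ gs ∈ antidiagonal gg.2,
          (1 + fsize hh.1) * Nat.choose (vInt hh.2 gs.1).toNat (2 * gs.2 + 2) *
            β gg.1 hh.1 * β gs.1 hh.2)
      + ∑ gs ∈ range (g + 1),
          Nat.choose (vInt f g + 2 * gs).toNat (2 * gs + 2) * β (g - gs) f

lemma sum_le_two_mul_sum_filter_le_comp {ι α R : Type*} [LinearOrder α]
    [Semiring R] [PartialOrder R] [IsOrderedRing R] {s : Finset ι} {σ : ι → ι}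
    (hσs : ∀ x ∈ s, σ x ∈ s) (hσσ : ∀ x, σ (σ x) = x) {F : ι → R} (hF : ∀ x ∈ s, 0 ≤ F x)
    (hFσ : ∀ x, F (σ x) = F x) (k : ι → α) :
    ∑ x ∈ s, F x ≤ 2 * ∑ x ∈ s with k x ≤ k (σ x), F x := by
  have hswap : ∑ x ∈ s with k (σ x) ≤ k x, F x = ∑ x ∈ s with k x ≤ k (σ x), F x :=
    sum_nbij' σ σ (by simp +contextual [hσs, hσσ]) (by simp +contextual [hσs, hσσ])
      (fun x _ => hσσ x) (fun x _ => hσσ x) (fun x _ => (hFσ x).symm)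
  have hrest : ∑ x ∈ s with ¬k x ≤ k (σ x), F x ≤ ∑ x ∈ s with k (σ x) ≤ k x, F x :=
    sum_le_sum_of_subset_of_nonneg (monotone_filter_right s fun _ _ h => le_of_not_ge h)
      fun x hx _ => hF x (mem_filter.1 hx).1
  rw [← sum_filter_add_sum_filter_not s (fun x => k x ≤ k (σ x)), two_mul]
  exact add_le_add_right (hrest.trans hswap.le) _

lemma fsize_add (a b : ℕ →₀ ℕ) : fsize (a + b) = fsize a + fsize b :=
  Finsupp.sum_add_index' (fun _ => by simp) (fun _ _ _ => by ring)

lemma vInt_add_vInt (h₁ h₂ : ℕ →₀ ℕ) (g₁ g₂ : ℕ) :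
    vInt h₁ g₁ + vInt h₂ g₂ = vInt (h₁ + h₂) (g₁ + g₂) + 2 := by
  unfold vInt
  rw [Finsupp.sum_add_index' (fun _ => by simp) (fun _ _ _ => by push_cast; ring)]
  push_cast
  ring

lemma mul_div_two_le_choose_two_toNat {n : ℤ} {x y : ℝ} (hx : 0 ≤ x) (hxy : x ≤ y)
    (hy : y ≤ n - 1) : x * y / 2 ≤ (n.toNat.choose 2 : ℝ) := by
  have hn : ((n.toNat : ℕ) : ℝ) = n := by
    have : (0 : ℝ) ≤ n := by linarith
    exact_mod_cast Int.toNat_of_nonneg (by exact_mod_cast this)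
  rw [Nat.cast_choose_two, hn]
  have : x * y ≤ n * (n - 1) := mul_le_mul (by linarith) hy (hx.trans hxy) (by linarith)
  linarith

section VertexBound

variable {κ : ℝ} {f h₁ h₂ : ℕ →₀ ℕ} {g g₁ g₂ : ℕ}

lemma half_mul_fsize_le_vInt_sub_one (hf : h₁ + h₂ = f) (hg : g₁ + g₂ = g)
    (hv : κ * fsize f ≤ vInt f g) (hle : vInt h₁ g₁ ≤ vInt h₂ g₂) :
    κ / 2 * fsize f ≤ (vInt h₂ g₂ : ℝ) - 1 := by
  have hsum : (vInt h₁ g₁ : ℝ) + vInt h₂ g₂ = vInt f g + 2 := by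
    exact_mod_cast hf ▸ hg ▸ vInt_add_vInt h₁ h₂ g₁ g₂
  have : (vInt h₁ g₁ : ℝ) ≤ vInt h₂ g₂ := by exact_mod_cast hle
  linarith

lemma sq_div_eight_mul_fsize_mul_fsize_le_choose (hκ : 0 ≤ κ) (hf : h₁ + h₂ = f)
    (hg : g₁ + g₂ = g) (hv : κ * fsize f ≤ vInt f g) (hle : vInt h₁ g₁ ≤ vInt h₂ g₂) :
    κ ^ 2 / 8 * fsize f * fsize h₂ ≤ ((vInt h₂ g₂).toNat.choose 2 : ℝ) := by
  have hh₂ : (fsize h₂ : ℝ) ≤ fsize f := by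
    rw [← hf, fsize_add]
    exact_mod_cast Nat.le_add_left _ _
  calc κ ^ 2 / 8 * fsize f * fsize h₂ = κ / 2 * fsize h₂ * (κ / 2 * fsize f) / 2 := by ring
    _ ≤ _ := mul_div_two_le_choose_two_toNat (by positivity) (by gcongr)
        (half_mul_fsize_le_vInt_sub_one hf hg hv hle)

lemma sq_div_eight_mul_fsize_mul_term_le (hκ : 0 ≤ κ) (hf : h₁ + h₂ = f) (hg : g₁ + g₂ = g)
    (hv : κ * fsize f ≤ vInt f g) (hle : vInt h₁ g₁ ≤ vInt h₂ g₂) {b₁ b₂ : ℝ}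
    (hb₁ : 0 ≤ b₁) (hb₂ : 0 ≤ b₂) :
    κ ^ 2 / 8 * fsize f * (fsize h₁ * b₁ * (fsize h₂ * b₂)) ≤
      (1 + fsize h₁) * (vInt h₂ g₂).toNat.choose 2 * b₁ * b₂ := by
  have hC := sq_div_eight_mul_fsize_mul_fsize_le_choose hκ hf hg hv hle
  have hb : 0 ≤ b₁ * b₂ := mul_nonneg hb₁ hb₂
  calc κ ^ 2 / 8 * fsize f * (fsize h₁ * b₁ * (fsize h₂ * b₂))
      = fsize h₁ * (κ ^ 2 / 8 * fsize f * fsize h₂) * (b₁ * b₂) := by ring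
    _ ≤ (1 + fsize h₁) * (vInt h₂ g₂).toNat.choose 2 * (b₁ * b₂) := by
        gcongr
        linarith
    _ = _ := by ring

end VertexBound

lemma sum_choose_two_le_of_bipartiteRecursion {β : ℕ → (ℕ →₀ ℕ) → ℕ}
    (hrec : BipartiteRecursion β) (g : ℕ) (f : ℕ →₀ ℕ) :
    ∑ x ∈ antidiagonal f ×ˢ antidiagonal g,
        (1 + fsize x.1.1) * (vInt x.1.2 x.2.2).toNat.choose 2 * β x.2.1 x.1.1 * β x.2.2 x.1.2
      ≤ (fsize f + 1).choose 2 * β g f := by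
  rw [sum_product, hrec g f]
  refine le_add_right (sum_le_sum fun hh _ => sum_le_sum fun gg _ => ?_)
  simpa using single_le_sum (fun _ _ => Nat.zero_le _)
    (show (gg.2, 0) ∈ antidiagonal gg.2 by simp)
      (f := fun gs : ℕ × ℕ => (1 + fsize hh.1) * Nat.choose (vInt hh.2 gs.1).toNat (2 * gs.2 + 2) *
        β gg.1 hh.1 * β gs.1 hh.2)

lemma sq_div_eight_mul_fsize_mul_sum_filter_le (β : ℕ → (ℕ →₀ ℕ) → ℕ) {κ : ℝ} (hκ : 0 ≤ κ)
    {g : ℕ} {f : ℕ →₀ ℕ} (hv : κ * fsize f ≤ vInt f g) :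
    κ ^ 2 / 8 * fsize f * ∑ x ∈ antidiagonal f ×ˢ antidiagonal g
        with vInt x.1.1 x.2.1 ≤ vInt x.1.2 x.2.2,
        (fsize x.1.1 * β x.2.1 x.1.1 : ℝ) * (fsize x.1.2 * β x.2.2 x.1.2)
      ≤ ∑ x ∈ antidiagonal f ×ˢ antidiagonal g,
        ((1 + fsize x.1.1) * (vInt x.1.2 x.2.2).toNat.choose 2 * β x.2.1 x.1.1 * β x.2.2 x.1.2 : ℝ) := by
  rw [mul_sum]
  refine (sum_le_sum fun x hx => ?_).trans (sum_le_sum_of_subset_of_nonneg (filter_subset _ _)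
    fun _ _ _ => by positivity)
  obtain ⟨hx, hle⟩ := mem_filter.1 hx
  obtain ⟨hf, hg⟩ := mem_product.1 hx
  exact sq_div_eight_mul_fsize_mul_term_le hκ (mem_antidiagonal.1 hf) (mem_antidiagonal.1 hg) hv
    hle (Nat.cast_nonneg _) (Nat.cast_nonneg _)

lemma sq_mul_sum_filter_le_of_bipartiteRecursion {β : ℕ → (ℕ →₀ ℕ) → ℕ}
    (hrec : BipartiteRecursion β) {κ : ℝ} (hκ : 0 ≤ κ) {g : ℕ} {f : ℕ →₀ ℕ}
    (hv : κ * fsize f ≤ vInt f g) :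
    κ ^ 2 * ∑ x ∈ antidiagonal f ×ˢ antidiagonal g with vInt x.1.1 x.2.1 ≤ vInt x.1.2 x.2.2,
        (fsize x.1.1 * β x.2.1 x.1.1 : ℝ) * (fsize x.1.2 * β x.2.2 x.1.2)
      ≤ 8 * fsize f * β g f := by
  rcases (fsize f).eq_zero_or_pos with hf0 | hfpos
  · refine (mul_eq_zero_of_right _ (sum_eq_zero fun x hx => ?_)).le.trans (by simp [hf0])
    have := congrArg fsize (mem_antidiagonal.1 (mem_product.1 (mem_filter.1 hx).1).1)
    rw [fsize_add, hf0] at this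
    simp [Nat.eq_zero_of_add_eq_zero_right this]
  have hgenus0 := Nat.cast_le (α := ℝ) |>.mpr (sum_choose_two_le_of_bipartiteRecursion hrec g f)
  push_cast at hgenus0
  have hhalf := (sq_div_eight_mul_fsize_mul_sum_filter_le β hκ hv).trans hgenus0
  have hfR : (1 : ℝ) ≤ fsize f := by exact_mod_cast hfpos
  have hC : ((fsize f + 1).choose 2 : ℝ) ≤ fsize f * fsize f := by
    rw [Nat.cast_choose_two]
    push_cast
    nlinarith
  have hβ : (0 : ℝ) ≤ β g f := Nat.cast_nonneg _
  refine le_of_mul_le_mul_left ?_ (zero_lt_one.trans_le hfR)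
  nlinarith

theorem statement15_general (β : ℕ → (ℕ →₀ ℕ) → ℕ)
    (hrec : ∀ (g : ℕ) (f : ℕ →₀ ℕ),
      Nat.choose (fsize f + 1) 2 * β g f =
        (∑ hh ∈ Finset.HasAntidiagonal.antidiagonal f, ∑ gg ∈ Finset.HasAntidiagonal.antidiagonal g,
          ∑ gs ∈ Finset.HasAntidiagonal.antidiagonal gg.2,
            (1 + fsize hh.1) * Nat.choose (vInt hh.2 gs.1).toNat (2 * gs.2 + 2) *
              β gg.1 hh.1 * β gs.1 hh.2)
        + ∑ gs ∈ Finset.range (g + 1),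
            Nat.choose (vInt f g + 2 * gs).toNat (2 * gs + 2) * β (g - gs) f) :
    ∀ (κ : ℝ), 0 < κ → ∀ (g : ℕ) (f : ℕ →₀ ℕ),
      κ * fsize f ≤ (vInt f g : ℝ) →
      ∑ hh ∈ Finset.HasAntidiagonal.antidiagonal f, ∑ gg ∈ Finset.HasAntidiagonal.antidiagonal g,
          ((fsize hh.1 : ℝ) * β gg.1 hh.1) * ((fsize hh.2 : ℝ) * β gg.2 hh.2)
        ≤ 16 / κ ^ 2 * fsize f * β g f := by
  intro κ hκ g f hv
  rw [← sum_product']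
  have hsym := sum_le_two_mul_sum_filter_le_comp (s := antidiagonal f ×ˢ antidiagonal g)
    (σ := fun x => (x.1.swap, x.2.swap)) (by simp [add_comm]) (fun _ => rfl)
    (F := fun x => (fsize x.1.1 * β x.2.1 x.1.1 : ℝ) * (fsize x.1.2 * β x.2.2 x.1.2))
    (fun _ _ => by positivity) (fun _ => mul_comm _ _) (fun x => vInt x.1.1 x.2.1)
  simp only [Prod.fst_swap] at hsym
  have hfilter := sq_mul_sum_filter_le_of_bipartiteRecursion hrec hκ.le hv
  rw [div_mul_eq_mul_div, div_mul_eq_mul_div, le_div_iff₀ (by positivity)]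
  nlinarith

/-- The recursion of [Lo19],
`C(|f|+1,2) β_g(f) = Σ_{h¹+h²=f, g¹+g²+g*=g} (1+|h¹|) C(v(h²,g²), 2g*+2) β_{g¹}(h¹) β_{g²}(h²)
  + Σ_{g*≥0} C(v(f,g)+2g*, 2g*+2) β_{g−g*}(f)`,
implies that whenever `κ > 0` and `v(f,g) ≥ κ|f|`, one has
`Σ_{h¹+h²=f, g¹+g²=g} |h¹| β_{g¹}(h¹) · |h²| β_{g²}(h²) ≤ (16/κ²) |f| β_g(f)`.
(Binomials with a negative upper entry are read as `0` via `Int.toNat`.) -/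
theorem statement15 (β : ℕ → (ℕ →₀ ℕ) → ℕ)
    (hβ0 : ∀ g, β g 0 = 0)
    (hrec : ∀ (g : ℕ) (f : ℕ →₀ ℕ),
      Nat.choose (fsize f + 1) 2 * β g f =
        (∑ hh ∈ Finset.HasAntidiagonal.antidiagonal f, ∑ gg ∈ Finset.HasAntidiagonal.antidiagonal g,
          ∑ gs ∈ Finset.HasAntidiagonal.antidiagonal gg.2,
            (1 + fsize hh.1) * Nat.choose (vInt hh.2 gs.1).toNat (2 * gs.2 + 2) *
              β gg.1 hh.1 * β gs.1 hh.2)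
        + ∑ gs ∈ Finset.range (g + 1),
            Nat.choose (vInt f g + 2 * gs).toNat (2 * gs + 2) * β (g - gs) f) :
    ∀ (κ : ℝ), 0 < κ → ∀ (g : ℕ) (f : ℕ →₀ ℕ),
      κ * fsize f ≤ (vInt f g : ℝ) →
      ∑ hh ∈ Finset.HasAntidiagonal.antidiagonal f, ∑ gg ∈ Finset.HasAntidiagonal.antidiagonal g,
          ((fsize hh.1 : ℝ) * β gg.1 hh.1) * ((fsize hh.2 : ℝ) * β gg.2 hh.2)
        ≤ 16 / κ ^ 2 * fsize f * β g f :=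
  statement15_general β hrec
end

section
/- Let X be a random walk on ℤ with i.i.d. steps, started at 0, in the domain of attraction of a 3/2-stable law with local limit theorem sup_k |n^{2/3} P(X_n = k) − g(k/n^{2/3})| → 0 for a continuous density g with g(0) > 0. Then for every η > 0 there exists ε > 0 such that, for all sufficiently large t and all integers k with −ε t^{2/3} ≤ k ≤ 0, the probability that X visits k before time t is at least 1 − η. -/
/-!
Write `X_n = ξ_0 + ⋯ + ξ_{n-1}`. Splitting each visit to `k` at the first visit, and using that
the increments after that stopping time form a fresh copy of the walk,
`∑_{i ≤ t} P(X_i = k) ≤ P(X visits k by time t) · ∑_{u ≤ t} P(X_u = 0)`.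
The local limit theorem together with the continuity of `g` at `0` gives
`n^{2/3} P(X_n = k) ≈ g(0)` uniformly in `|k| ≤ c n^{2/3}`. Summing `n^{-2/3}` shows that the
right-hand sum is at most about `3 g(0) t^{1/3}`, while the left-hand sum, restricted to the times
`n ≥ α t` at which `|k| ≤ ε t^{2/3} ≤ c n^{2/3}`, is at least about `3 g(0) (1 - α^{1/3}) t^{1/3}`.
Taking `α` small, and then `ε = c α^{2/3}`, the hitting probability is at least `1 - η`.
-/

open MeasureTheory ProbabilityTheory Finset Filter

lemma rpow_one_third_pow_three {x : ℝ} (hx : 0 ≤ x) : (x ^ ((1 : ℝ) / 3)) ^ 3 = x := by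
  rw [← Real.rpow_natCast, ← Real.rpow_mul hx]
  norm_num

lemma rpow_one_third_sq {x : ℝ} (hx : 0 ≤ x) : (x ^ ((1 : ℝ) / 3)) ^ 2 = x ^ ((2 : ℝ) / 3) := by
  rw [← Real.rpow_natCast, ← Real.rpow_mul hx]
  norm_num

lemma rpow_one_third_le_of_le_pow_three {x y : ℝ} (hx : 0 ≤ x) (hy : 0 ≤ y) (h : x ≤ y ^ 3) :
    x ^ ((1 : ℝ) / 3) ≤ y :=
  (pow_le_pow_iff_left₀ (Real.rpow_nonneg hx _) hy (by norm_num : 3 ≠ 0)).mp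
    (by rwa [rpow_one_third_pow_three hx])

/-- Mean value bounds for `x ↦ 3 x ^ (1/3)` on `[x, x + 1]`, from
`b ^ 3 - a ^ 3 = (b - a) (a ^ 2 + a b + b ^ 2)` with `a = x ^ (1/3)`, `b = (x + 1) ^ (1/3)`. -/
lemma rpow_two_thirds_mul_succ_sub_le {x : ℝ} (hx : 0 ≤ x) :
    x ^ ((2 : ℝ) / 3) * (3 * ((x + 1) ^ ((1 : ℝ) / 3) - x ^ ((1 : ℝ) / 3))) ≤ 1 ∧
      1 ≤ (x + 1) ^ ((2 : ℝ) / 3) * (3 * ((x + 1) ^ ((1 : ℝ) / 3) - x ^ ((1 : ℝ) / 3))) := by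
  have ha := rpow_one_third_pow_three hx
  have hb := rpow_one_third_pow_three (by linarith : 0 ≤ x + 1)
  rw [← rpow_one_third_sq hx, ← rpow_one_third_sq (by linarith : 0 ≤ x + 1)]
  set a := x ^ ((1 : ℝ) / 3)
  set b := (x + 1) ^ ((1 : ℝ) / 3)
  have ha0 : 0 ≤ a := Real.rpow_nonneg hx _
  have hab : a ≤ b := Real.rpow_le_rpow hx (by linarith) (by norm_num)
  have hd : 0 ≤ (b - a) ^ 2 := sq_nonneg _
  constructor <;> nlinarith [mul_nonneg hd ha0, mul_nonneg hd (ha0.trans hab)]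

-- In these sums the term `i = 0` is `(0 ^ (2/3))⁻¹ = 0`.
lemma sum_range_succ_inv_rpow_le (n : ℕ) :
    ∑ i ∈ range (n + 1), ((i : ℝ) ^ ((2 : ℝ) / 3))⁻¹ ≤ 3 * (n : ℝ) ^ ((1 : ℝ) / 3) := by
  induction n with
  | zero => simp
  | succ n ih =>
    have h := (rpow_two_thirds_mul_succ_sub_le n.cast_nonneg).2
    have hpos : 0 < ((n : ℝ) + 1) ^ ((2 : ℝ) / 3) := by positivity
    have : (((n : ℝ) + 1) ^ ((2 : ℝ) / 3))⁻¹
        ≤ 3 * (((n : ℝ) + 1) ^ ((1 : ℝ) / 3) - (n : ℝ) ^ ((1 : ℝ) / 3)) := by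
      rw [inv_eq_one_div, div_le_iff₀ hpos]
      linarith
    rw [sum_range_succ, Nat.cast_succ]
    linarith

lemma le_sum_range_succ_inv_rpow (n : ℕ) :
    3 * (((n : ℝ) + 1) ^ ((1 : ℝ) / 3) - 1)
      ≤ ∑ i ∈ range (n + 1), ((i : ℝ) ^ ((2 : ℝ) / 3))⁻¹ := by
  induction n with
  | zero => simp
  | succ n ih =>
    have h := (rpow_two_thirds_mul_succ_sub_le (by positivity : (0 : ℝ) ≤ n + 1)).1
    have hpos : 0 < ((n : ℝ) + 1) ^ ((2 : ℝ) / 3) := by positivity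
    rw [sum_range_succ, Nat.cast_succ]
    have : 3 * (((n : ℝ) + 1 + 1) ^ ((1 : ℝ) / 3) - ((n : ℝ) + 1) ^ ((1 : ℝ) / 3))
        ≤ (((n : ℝ) + 1) ^ ((2 : ℝ) / 3))⁻¹ := by
      rw [inv_eq_one_div, le_div_iff₀ hpos]
      linarith
    linarith

lemma sum_range_le_of_rpow_mul_le {p : ℕ → ℝ} {N : ℕ} {A : ℝ} (hp : ∀ n, p n ≤ 1)
    (hA : 0 ≤ A) (hpA : ∀ n, N ≤ n → (n : ℝ) ^ ((2 : ℝ) / 3) * p n ≤ A) (t : ℕ) :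
    ∑ n ∈ range (t + 1), p n ≤ N + 1 + 3 * A * (t : ℝ) ^ ((1 : ℝ) / 3) := by
  classical
  have hpoint : ∀ n, p n ≤ (if n ≤ N then 1 else 0) + A * ((n : ℝ) ^ ((2 : ℝ) / 3))⁻¹ := by
    intro n
    split_ifs with hn
    · have : 0 ≤ A * ((n : ℝ) ^ ((2 : ℝ) / 3))⁻¹ := by positivity
      linarith [hp n]
    · have hpos : 0 < (n : ℝ) ^ ((2 : ℝ) / 3) := by
        have : (0 : ℝ) < n := by exact_mod_cast (by omega : 0 < n)
        positivity
      rw [zero_add, ← div_eq_mul_inv, le_div_iff₀ hpos, mul_comm]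
      exact hpA n (by omega)
  have hcount : ∑ n ∈ range (t + 1), (if n ≤ N then (1 : ℝ) else 0) ≤ N + 1 := by
    rw [sum_boole]
    have hsub : {n ∈ range (t + 1) | n ≤ N} ⊆ range (N + 1) := fun n hn => by
      simp only [mem_filter, mem_range] at hn ⊢
      omega
    exact_mod_cast (card_le_card hsub).trans (card_range _).le
  calc ∑ n ∈ range (t + 1), p n
      ≤ ∑ n ∈ range (t + 1),
          ((if n ≤ N then 1 else 0) + A * ((n : ℝ) ^ ((2 : ℝ) / 3))⁻¹) :=
        sum_le_sum fun n _ => hpoint n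
    _ ≤ N + 1 + A * (3 * (t : ℝ) ^ ((1 : ℝ) / 3)) := by
        rw [sum_add_distrib, ← mul_sum]
        gcongr
        exact sum_range_succ_inv_rpow_le t
    _ = N + 1 + 3 * A * (t : ℝ) ^ ((1 : ℝ) / 3) := by ring

lemma le_sum_range_of_le_rpow_mul {p : ℕ → ℝ} {m t : ℕ} {a : ℝ} (hp : ∀ n, 0 ≤ p n)
    (ha : 0 ≤ a) (hpa : ∀ n, m ≤ n → n ≤ t → a ≤ (n : ℝ) ^ ((2 : ℝ) / 3) * p n) :
    3 * a * (((t : ℝ) + 1) ^ ((1 : ℝ) / 3) - 1 - (m : ℝ) ^ ((1 : ℝ) / 3))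
      ≤ ∑ n ∈ range (t + 1), p n := by
  classical
  set f : ℕ → ℝ := fun n => a * ((n : ℝ) ^ ((2 : ℝ) / 3))⁻¹
  have hpoint : ∀ n ∈ range (t + 1), f n - (if n < m then f n else 0) ≤ p n := by
    intro n hn
    split_ifs with hnm
    · simpa using hp n
    rcases Nat.eq_zero_or_pos n with rfl | hn0
    · simpa [f] using hp 0
    have hpos : 0 < (n : ℝ) ^ ((2 : ℝ) / 3) := by
      have : (0 : ℝ) < n := by exact_mod_cast hn0
      positivity
    simp only [f]
    rw [sub_zero, ← div_eq_mul_inv, div_le_iff₀ hpos, mul_comm]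
    exact hpa n (by omega) (by simpa [Nat.lt_succ_iff] using hn)
  have hhead :
      ∑ n ∈ range (t + 1), (if n < m then f n else 0) ≤ a * (3 * (m : ℝ) ^ ((1 : ℝ) / 3)) := by
    have hsub : {n ∈ range (t + 1) | n < m} ⊆ range (m + 1) := fun n hn => by
      simp only [mem_filter, mem_range] at hn ⊢
      omega
    rw [← sum_filter]
    calc ∑ n ∈ range (t + 1) with n < m, f n ≤ ∑ n ∈ range (m + 1), f n :=
          sum_le_sum_of_subset_of_nonneg hsub fun n _ _ => by positivity
      _ ≤ a * (3 * (m : ℝ) ^ ((1 : ℝ) / 3)) := by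
          rw [← mul_sum]
          gcongr
          exact sum_range_succ_inv_rpow_le m
  calc 3 * a * (((t : ℝ) + 1) ^ ((1 : ℝ) / 3) - 1 - (m : ℝ) ^ ((1 : ℝ) / 3))
      = a * (3 * (((t : ℝ) + 1) ^ ((1 : ℝ) / 3) - 1)) - a * (3 * (m : ℝ) ^ ((1 : ℝ) / 3)) := by
        ring
    _ ≤ ∑ n ∈ range (t + 1), f n - ∑ n ∈ range (t + 1), (if n < m then f n else 0) := by
        rw [← mul_sum]
        gcongr
        exact le_sum_range_succ_inv_rpow t
    _ ≤ ∑ n ∈ range (t + 1), p n := by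
        rw [← sum_sub_distrib]
        exact sum_le_sum hpoint

lemma le_sum_range_of_le_rpow_mul_of_le {p : ℕ → ℝ} {t : ℕ} {a r : ℝ} (hp : ∀ n, 0 ≤ p n)
    (ha : 0 ≤ a) (hr : 1 ≤ r)
    (hpa : ∀ n : ℕ, r ≤ n → n ≤ t → a ≤ (n : ℝ) ^ ((2 : ℝ) / 3) * p n) :
    3 * a * (((t : ℝ) + 1) ^ ((1 : ℝ) / 3) - 1 - (2 * r) ^ ((1 : ℝ) / 3))
      ≤ ∑ n ∈ range (t + 1), p n := by
  have hm : (⌈r⌉₊ : ℝ) ≤ 2 * r := by linarith [Nat.ceil_lt_add_one (by linarith : 0 ≤ r)]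
  refine le_trans ?_ (le_sum_range_of_le_rpow_mul hp ha fun n hn => hpa n (Nat.ceil_le.mp hn))
  gcongr

lemma exists_abs_rpow_mul_sub_le_of_localLimit {q : ℕ → ℤ → ℝ} {g : ℝ → ℝ}
    (hg : ContinuousAt g 0)
    (hLLT : ∀ δ > (0 : ℝ), ∃ N : ℕ, ∀ n : ℕ, N ≤ n → ∀ k : ℤ,
      |(n : ℝ) ^ ((2 : ℝ) / 3) * q n k - g ((k : ℝ) / (n : ℝ) ^ ((2 : ℝ) / 3))| ≤ δ)
    {δ : ℝ} (hδ : 0 < δ) :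
    ∃ c > 0, ∃ N : ℕ, ∀ n : ℕ, N ≤ n → ∀ k : ℤ, |(k : ℝ)| ≤ c * (n : ℝ) ^ ((2 : ℝ) / 3) →
      |(n : ℝ) ^ ((2 : ℝ) / 3) * q n k - g 0| ≤ 2 * δ := by
  obtain ⟨c, hc, hgc⟩ := Metric.continuousAt_iff.mp hg δ hδ
  obtain ⟨N, hN⟩ := hLLT δ hδ
  refine ⟨c / 2, by positivity, N, fun n hn k hk => ?_⟩
  have hclose : dist ((k : ℝ) / (n : ℝ) ^ ((2 : ℝ) / 3)) 0 < c := by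
    rw [Real.dist_eq, sub_zero, abs_div, abs_of_nonneg (Real.rpow_nonneg n.cast_nonneg _)]
    exact (div_le_of_le_mul₀ (by positivity) (by positivity) hk).trans_lt (by linarith)
  have hgk := (hgc hclose).le
  rw [Real.dist_eq] at hgk
  calc _ ≤ |(n : ℝ) ^ ((2 : ℝ) / 3) * q n k - g ((k : ℝ) / (n : ℝ) ^ ((2 : ℝ) / 3))|
        + |g ((k : ℝ) / (n : ℝ) ^ ((2 : ℝ) / 3)) - g 0| := abs_sub_le _ _ _
    _ ≤ 2 * δ := by linarith [hN n hn k]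

theorem exists_one_sub_mul_sum_le_of_localLimit {q : ℕ → ℤ → ℝ} (hq0 : ∀ n k, 0 ≤ q n k)
    (hq1 : ∀ n k, q n k ≤ 1) {g : ℝ → ℝ} (hg : ContinuousAt g 0) (hg0 : 0 < g 0)
    (hLLT : ∀ δ > (0 : ℝ), ∃ N : ℕ, ∀ n : ℕ, N ≤ n → ∀ k : ℤ,
      |(n : ℝ) ^ ((2 : ℝ) / 3) * q n k - g ((k : ℝ) / (n : ℝ) ^ ((2 : ℝ) / 3))| ≤ δ)
    {η : ℝ} (hη : 0 < η) (hη1 : η < 1) :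
    ∃ ε > 0, ∀ᶠ t : ℕ in atTop, ∀ k : ℤ, |(k : ℝ)| ≤ ε * (t : ℝ) ^ ((2 : ℝ) / 3) →
      (1 - η) * ∑ n ∈ range (t + 1), q n 0 ≤ ∑ n ∈ range (t + 1), q n k := by
  -- With `θ = η / 4`, the two sums are `3 g(0) t^{1/3}` up to the factors `1 + 2θ` and
  -- `(1 - θ / 2)(1 - θ)`, and `(1 - 4θ)(1 + 2θ) ≤ (1 - θ / 2)(1 - θ)`.
  set θ := η / 4 with hθ
  obtain ⟨c, hc, N, hN⟩ :=
    exists_abs_rpow_mul_sub_le_of_localLimit hg hLLT (δ := g 0 * θ / 4) (by positivity)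
  set α := θ ^ 3 / 16 with hα
  refine ⟨c * α ^ ((2 : ℝ) / 3), by positivity, ?_⟩
  have hX : Tendsto (fun t : ℕ => (t : ℝ) ^ ((1 : ℝ) / 3)) atTop atTop :=
    (tendsto_rpow_atTop (by norm_num)).comp tendsto_natCast_atTop_atTop
  have hαt : Tendsto (fun t : ℕ => α * t) atTop atTop :=
    tendsto_natCast_atTop_atTop.const_mul_atTop (by positivity)
  filter_upwards [hαt.eventually_ge_atTop (N + 1), hX.eventually_ge_atTop (2 / θ),
    hX.eventually_ge_atTop ((N + 1) / (3 * g 0 * θ))] with t hNt hθX hNX k hk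
  set X := (t : ℝ) ^ ((1 : ℝ) / 3) with hXdef
  rw [div_le_iff₀ (by positivity)] at hθX hNX
  have hden : ∑ n ∈ range (t + 1), q n 0 ≤ 3 * g 0 * X * (1 + 2 * θ) := by
    have hA : ∀ n, N ≤ n → (n : ℝ) ^ ((2 : ℝ) / 3) * q n 0 ≤ g 0 * (1 + θ / 2) :=
      fun n hn => by linarith [(abs_le.mp (hN n hn 0 (by simp; positivity))).2]
    have := sum_range_le_of_rpow_mul_le (fun n => hq1 n 0) (by positivity) hA t
    nlinarith
  have hnum : 3 * (g 0 * (1 - θ / 2))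
      * (((t : ℝ) + 1) ^ ((1 : ℝ) / 3) - 1 - (2 * (α * t)) ^ ((1 : ℝ) / 3))
      ≤ ∑ n ∈ range (t + 1), q n k := by
    refine le_sum_range_of_le_rpow_mul_of_le (fun n => hq0 n k) (by nlinarith)
      (by linarith [N.cast_nonneg (α := ℝ)]) fun n hn _ => ?_
    have hkn : |(k : ℝ)| ≤ c * (n : ℝ) ^ ((2 : ℝ) / 3) := by
      refine hk.trans ?_
      rw [mul_assoc, ← Real.mul_rpow (by positivity) (by positivity)]
      gcongr
    linarith [(abs_le.mp (hN n (by exact_mod_cast (show (N : ℝ) ≤ n by linarith)) k hkn)).1]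
  have hcut : (2 * (α * t)) ^ ((1 : ℝ) / 3) ≤ θ * X / 2 := by
    refine rpow_one_third_le_of_le_pow_three (by positivity) (by positivity) (le_of_eq ?_)
    rw [div_pow, mul_pow, hXdef, rpow_one_third_pow_three (by positivity), hα]
    ring
  have hXt : X ≤ ((t : ℝ) + 1) ^ ((1 : ℝ) / 3) :=
    Real.rpow_le_rpow (by positivity) (by linarith) (by norm_num)
  have hX0 : 0 ≤ X := by positivity
  calc (1 - η) * ∑ n ∈ range (t + 1), q n 0 ≤ (1 - η) * (3 * g 0 * X * (1 + 2 * θ)) :=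
        mul_le_mul_of_nonneg_left hden (by linarith)
    _ ≤ 3 * (g 0 * (1 - θ / 2)) * (X - θ * X) := by
        nlinarith [mul_nonneg hg0.le hX0, sq_nonneg θ]
    _ ≤ 3 * (g 0 * (1 - θ / 2))
          * (((t : ℝ) + 1) ^ ((1 : ℝ) / 3) - 1 - (2 * (α * t)) ^ ((1 : ℝ) / 3)) :=
        mul_le_mul_of_nonneg_left (by linarith) (by nlinarith)
    _ ≤ ∑ n ∈ range (t + 1), q n k := hnum

section RandomWalk

variable {Ω β : Type*} [AddCommGroup β] {ξ : ℕ → Ω → β}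

def walk (ξ : ℕ → Ω → β) (n : ℕ) (ω : Ω) : β := ∑ j ∈ range n, ξ j ω

def firstVisit (ξ : ℕ → Ω → β) (k : β) (s : ℕ) : Set Ω :=
  {ω | walk ξ s ω = k ∧ ∀ r < s, walk ξ r ω ≠ k}

lemma walk_add_sum_Ico {s i : ℕ} (hsi : s ≤ i) (ω : Ω) :
    walk ξ s ω + ∑ j ∈ Ico s i, ξ j ω = walk ξ i ω :=
  sum_range_add_sum_Ico _ hsi

lemma pairwiseDisjoint_firstVisit (k : β) (S : Set ℕ) : S.PairwiseDisjoint (firstVisit ξ k) := by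
  intro s _ s' _ hss'
  refine Set.disjoint_left.mpr fun ω hs hs' => ?_
  rcases hss'.lt_or_gt with h | h
  · exact hs'.2 s h hs.1
  · exact hs.2 s' h hs'.1

lemma setOf_walk_eq_eq_biUnion (k : β) (i : ℕ) :
    {ω | walk ξ i ω = k}
      = ⋃ s ∈ range (i + 1), firstVisit ξ k s ∩ {ω | ∑ j ∈ Ico s i, ξ j ω = 0} := by
  classical
  ext ω
  simp only [Set.mem_iUnion, Set.mem_inter_iff, mem_range, Nat.lt_succ_iff]
  constructor
  · intro h
    have hex : ∃ r, walk ξ r ω = k := ⟨i, h⟩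
    have hsi : Nat.find hex ≤ i := Nat.find_min' hex h
    refine ⟨Nat.find hex, hsi, ⟨Nat.find_spec hex, fun r hr => Nat.find_min hex hr⟩, ?_⟩
    have := walk_add_sum_Ico (ξ := ξ) hsi ω
    rw [Nat.find_spec hex, h] at this
    simpa using this
  · rintro ⟨s, hsi, ⟨hs, -⟩, h0⟩
    show walk ξ i ω = k
    rw [← walk_add_sum_Ico hsi, hs, h0, add_zero]

variable [MeasurableSpace β] [MeasurableAdd₂ β]

lemma measurable_walk {m : MeasurableSpace Ω} (hmeas : ∀ n, Measurable (ξ n)) (n : ℕ) :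
    Measurable (walk ξ n) :=
  Finset.measurable_sum _ fun j _ => hmeas j

lemma measurableSet_firstVisit {m : MeasurableSpace Ω} [MeasurableSingletonClass β] (k : β)
    (s : ℕ) (hmeas : ∀ j < s, Measurable (ξ j)) : MeasurableSet (firstVisit ξ k s) := by
  have hwalk : ∀ r ≤ s, Measurable (walk ξ r) := fun r hr =>
    Finset.measurable_sum _ fun j hj => hmeas j (by simp at hj; omega)
  simp only [firstVisit, Set.ofPred_and, Set.ofPred_forall]
  exact (hwalk s le_rfl (measurableSet_singleton k)).inter <| .iInter fun r => .iInter fun hr =>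
    (hwalk r hr.le (measurableSet_singleton k)).compl

variable [MeasurableSpace Ω] {P : Measure Ω}

lemma measure_firstVisit_inter [MeasurableSingletonClass β] (hmeas : ∀ n, Measurable (ξ n))
    (hindep : iIndepFun ξ P) (k : β) (s i : ℕ) :
    P (firstVisit ξ k s ∩ {ω | ∑ j ∈ Ico s i, ξ j ω = 0})
      = P (firstVisit ξ k s) * P {ω | ∑ j ∈ Ico s i, ξ j ω = 0} := by
  set σ : ℕ → MeasurableSpace Ω := fun j => MeasurableSpace.comap (ξ j) inferInstance
  have hσ : ∀ {S : Set ℕ} {j}, j ∈ S → Measurable[⨆ j ∈ S, σ j] (ξ j) := fun hj =>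
    (comap_measurable _).mono (le_iSup₂ (f := fun j (_ : j ∈ _) => σ j) _ hj) le_rfl
  have hind : Indep (⨆ j ∈ Set.Iio s, σ j) (⨆ j ∈ Set.Ici s, σ j) P :=
    indep_iSup_of_disjoint (fun j => (hmeas j).comap_le)
      ((iIndepFun_iff_iIndep _ _ _).mp hindep) (Set.Iio_disjoint_Ici le_rfl)
  refine (Indep_iff _ _ _).mp hind _ _ (measurableSet_firstVisit k s fun j hj => hσ hj) ?_
  exact Finset.measurable_sum (m := ⨆ j ∈ Set.Ici s, σ j) _
    (fun j hj => hσ (Finset.mem_Ico.mp hj).1) (measurableSet_singleton 0)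

variable [IsFiniteMeasure P]

lemma map_sum_Ico_eq_map_walk (hmeas : ∀ n, Measurable (ξ n)) (hindep : iIndepFun ξ P)
    (hident : ∀ n, P.map (ξ n) = P.map (ξ 0)) (s m : ℕ) :
    P.map (fun ω => ∑ j ∈ Ico s (s + m), ξ j ω) = P.map (walk ξ m) := by
  induction m with
  | zero =>
    rw [show walk ξ 0 = fun _ => 0 from funext fun _ => sum_range_zero _]
    simp
  | succ m ih =>
    have h₁ : IndepFun (fun ω => ∑ j ∈ Ico s (s + m), ξ j ω) (ξ (s + m)) P := by
      have := hindep.indepFun_finsetSum_of_notMem hmeas (s := Ico s (s + m)) (i := s + m)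
        (by simp)
      rwa [sum_fn] at this
    have h₂ : IndepFun (walk ξ m) (ξ m) P := by
      have := hindep.indepFun_finsetSum_of_notMem hmeas (s := range m) (i := m) (by simp)
      rwa [sum_fn] at this
    have e₁ : (fun ω => ∑ j ∈ Ico s (s + (m + 1)), ξ j ω)
        = (fun ω => ∑ j ∈ Ico s (s + m), ξ j ω) + ξ (s + m) := by
      funext ω
      simp [← add_assoc, sum_Ico_succ_top (Nat.le_add_right s m)]
    have e₂ : walk ξ (m + 1) = walk ξ m + ξ m := by
      funext ω
      simp [walk, sum_range_succ]
    rw [e₁, e₂,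
      h₁.map_add_eq_map_conv_map (Finset.measurable_sum _ fun j _ => hmeas j) (hmeas _),
      h₂.map_add_eq_map_conv_map (measurable_walk hmeas m) (hmeas m), ih, hident, hident m]

variable [MeasurableSingletonClass β]

lemma measure_walk_eq_eq_sum (hmeas : ∀ n, Measurable (ξ n))
    (hindep : iIndepFun ξ P) (hident : ∀ n, P.map (ξ n) = P.map (ξ 0)) (k : β) (i : ℕ) :
    P {ω | walk ξ i ω = k}
      = ∑ s ∈ range (i + 1), P (firstVisit ξ k s) * P {ω | walk ξ (i - s) ω = 0} := by
  rw [setOf_walk_eq_eq_biUnion, measure_biUnion_finset]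
  · refine sum_congr rfl fun s hs => ?_
    have hlaw := congrArg (· {0}) (map_sum_Ico_eq_map_walk hmeas hindep hident s (i - s))
    rw [Nat.add_sub_cancel' (Nat.lt_succ_iff.mp (mem_range.mp hs))] at hlaw
    rw [Measure.map_apply (Finset.measurable_sum _ fun j _ => hmeas j)
      (measurableSet_singleton 0),
      Measure.map_apply (measurable_walk hmeas _) (measurableSet_singleton 0)] at hlaw
    rw [measure_firstVisit_inter hmeas hindep]
    exact congrArg _ hlaw
  · exact (pairwiseDisjoint_firstVisit k _).mono fun s => Set.inter_subset_left
  · exact fun s _ => (measurableSet_firstVisit k s fun j _ => hmeas j).inter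
      (Finset.measurable_sum _ (fun j _ => hmeas j) (measurableSet_singleton 0))

theorem sum_measure_walk_eq_le (hmeas : ∀ n, Measurable (ξ n))
    (hindep : iIndepFun ξ P) (hident : ∀ n, P.map (ξ n) = P.map (ξ 0)) (k : β) (t : ℕ) :
    ∑ i ∈ range (t + 1), P {ω | walk ξ i ω = k}
      ≤ P {ω | ∃ i ≤ t, walk ξ i ω = k} * ∑ u ∈ range (t + 1), P {ω | walk ξ u ω = 0} := by
  calc ∑ i ∈ range (t + 1), P {ω | walk ξ i ω = k}
      = ∑ i ∈ range (t + 1), ∑ s ∈ range (i + 1),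
          P (firstVisit ξ k s) * P {ω | walk ξ (i - s) ω = 0} :=
        sum_congr rfl fun i _ => measure_walk_eq_eq_sum hmeas hindep hident k i
    _ = ∑ s ∈ range (t + 1),
          P (firstVisit ξ k s) * ∑ i ∈ Ico s (t + 1), P {ω | walk ξ (i - s) ω = 0} := by
        simp_rw [mul_sum]
        exact sum_comm' fun i s => by simp only [mem_range, mem_Ico]; omega
    _ ≤ ∑ s ∈ range (t + 1),
          P (firstVisit ξ k s) * ∑ u ∈ range (t + 1), P {ω | walk ξ u ω = 0} := by
        gcongr with s hs
        rw [sum_Ico_eq_sum_range]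
        simp only [Nat.add_sub_cancel_left]
        exact sum_le_sum_of_subset (range_subset_range.mpr (Nat.sub_le _ _))
    _ = P (⋃ s ∈ range (t + 1), firstVisit ξ k s)
          * ∑ u ∈ range (t + 1), P {ω | walk ξ u ω = 0} := by
        rw [← sum_mul, measure_biUnion_finset (pairwiseDisjoint_firstVisit _ _)
          fun s _ => measurableSet_firstVisit k s fun j _ => hmeas j]
    _ ≤ P {ω | ∃ i ≤ t, walk ξ i ω = k} * ∑ u ∈ range (t + 1), P {ω | walk ξ u ω = 0} := by
        gcongr
        simp only [Set.iUnion_subset_iff, mem_range, Nat.lt_succ_iff]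
        exact fun s hs ω hω => ⟨s, hs, hω.1⟩

theorem sum_measureReal_walk_eq_le (hmeas : ∀ n, Measurable (ξ n))
    (hindep : iIndepFun ξ P) (hident : ∀ n, P.map (ξ n) = P.map (ξ 0)) (k : β) (t : ℕ) :
    ∑ i ∈ range (t + 1), P.real {ω | walk ξ i ω = k}
      ≤ P.real {ω | ∃ i ≤ t, walk ξ i ω = k}
        * ∑ u ∈ range (t + 1), P.real {ω | walk ξ u ω = 0} := by
  simp only [measureReal_def]
  rw [← ENNReal.toReal_sum fun _ _ => measure_ne_top _ _,
    ← ENNReal.toReal_sum fun _ _ => measure_ne_top _ _, ← ENNReal.toReal_mul]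
  refine ENNReal.toReal_mono ?_ (sum_measure_walk_eq_le hmeas hindep hident k t)
  exact ENNReal.mul_ne_top (measure_ne_top _ _)
    (ENNReal.sum_ne_top.mpr fun _ _ => measure_ne_top _ _)

end RandomWalk

theorem statement17_general {Ω : Type*} [MeasurableSpace Ω] (P : Measure Ω) [IsProbabilityMeasure P]
    (ξ : ℕ → Ω → ℤ)
    (hmeas : ∀ n, Measurable (ξ n))
    (hindep : iIndepFun ξ P)
    (hident : ∀ n, Measure.map (ξ n) P = Measure.map (ξ 0) P)
    (g : ℝ → ℝ) (hgcont : Continuous g) (hg0 : 0 < g 0)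
    (hLLT : ∀ δ > (0 : ℝ), ∃ N : ℕ, ∀ n : ℕ, N ≤ n → ∀ k : ℤ,
      |(n : ℝ) ^ ((2 : ℝ) / 3) * (P {ω | (∑ j ∈ Finset.range n, ξ j ω) = k}).toReal
        - g ((k : ℝ) / (n : ℝ) ^ ((2 : ℝ) / 3))| ≤ δ) :
    ∀ η > (0 : ℝ), ∃ ε > (0 : ℝ), ∃ T : ℕ, ∀ t : ℕ, T ≤ t → ∀ k : ℤ,
      -(ε * (t : ℝ) ^ ((2 : ℝ) / 3)) ≤ (k : ℝ) → k ≤ 0 →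
      ENNReal.ofReal (1 - η)
        ≤ P {ω | ∃ i : ℕ, i ≤ t ∧ (∑ j ∈ Finset.range i, ξ j ω) = k} := by
  intro η hη
  rcases le_or_gt 1 η with hη1 | hη1
  · exact ⟨1, one_pos, 0, fun _ _ _ _ _ => by
      simp [ENNReal.ofReal_of_nonpos (sub_nonpos.2 hη1)]⟩
  obtain ⟨ε, hε, hev⟩ := exists_one_sub_mul_sum_le_of_localLimit
    (q := fun n k => P.real {ω | walk ξ n ω = k}) (fun _ _ => measureReal_nonneg)
    (fun _ _ => measureReal_le_one) hgcont.continuousAt hg0 hLLT hη hη1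
  obtain ⟨T, hT⟩ := eventually_atTop.mp hev
  refine ⟨ε, hε, T, fun t ht k hk hk0 => ENNReal.ofReal_le_of_le_toReal ?_⟩
  have hk' : |(k : ℝ)| ≤ ε * (t : ℝ) ^ ((2 : ℝ) / 3) :=
    abs_le.mpr ⟨hk, (Int.cast_nonpos.mpr hk0).trans (by positivity)⟩
  have hD : 0 < ∑ u ∈ range (t + 1), P.real {ω | walk ξ u ω = 0} :=
    lt_of_lt_of_le (by simp [walk]) (single_le_sum (fun _ _ => measureReal_nonneg)
      (mem_range.mpr t.succ_pos))
  exact le_of_mul_le_mul_right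
    ((hT t ht k hk').trans (sum_measureReal_walk_eq_le hmeas hindep hident k t)) hD

/-- Let `X_n = ξ_0 + ⋯ + ξ_{n-1}` be a random walk on `ℤ` with i.i.d. steps, started at `0`,
satisfying the local limit theorem `sup_k |n^{2/3} P(X_n = k) − g(k/n^{2/3})| → 0` for a
continuous nonnegative density `g` with `g(0) > 0`.  Then for every `η > 0` there exists
`ε > 0` such that, for all sufficiently large `t` and all integers `k` with
`−ε t^{2/3} ≤ k ≤ 0`, the probability that `X` visits `k` before time `t` is at
least `1 − η`. -/
theorem statement17 {Ω : Type*} [MeasurableSpace Ω] (P : Measure Ω) [IsProbabilityMeasure P]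
    (ξ : ℕ → Ω → ℤ)
    (hmeas : ∀ n, Measurable (ξ n))
    (hindep : iIndepFun ξ P)
    (hident : ∀ n, Measure.map (ξ n) P = Measure.map (ξ 0) P)
    (g : ℝ → ℝ) (hgcont : Continuous g) (hg0 : 0 < g 0) (hgpos : ∀ x, 0 ≤ g x)
    (hLLT : ∀ δ > (0 : ℝ), ∃ N : ℕ, ∀ n : ℕ, N ≤ n → ∀ k : ℤ,
      |(n : ℝ) ^ ((2 : ℝ) / 3) * (P {ω | (∑ j ∈ Finset.range n, ξ j ω) = k}).toReal
        - g ((k : ℝ) / (n : ℝ) ^ ((2 : ℝ) / 3))| ≤ δ) :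
    ∀ η > (0 : ℝ), ∃ ε > (0 : ℝ), ∃ T : ℕ, ∀ t : ℕ, T ≤ t → ∀ k : ℤ,
      -(ε * (t : ℝ) ^ ((2 : ℝ) / 3)) ≤ (k : ℝ) → k ≤ 0 →
      ENNReal.ofReal (1 - η)
        ≤ P {ω | ∃ i : ℕ, i ≤ t ∧ (∑ j ∈ Finset.range i, ξ j ω) = k} :=
  statement17_general P ξ hmeas hindep hident g hgcont hg0 hLLT
end
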